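/- Let μ be any Möbius function for 𝒢. For all integers m, x with 0 < m ≤ x, μ(P_m, P_x) = (−1)^{x−m}. -/

import Mathlib

/-!
Möbius inversion determines `μ(P_m, ·)` on the induced subgraphs of `P_x` by induction on the
order, so it suffices to find a function with the same interval sums. The candidate is
`(-1)^(k-m)` on `P_k`, `-(-1)^(k-m)` on `P_k + K_1` and `0` elsewhere. An induced subgraph `G` of
`P_x` is a set of integers. If that set is an interval, `G` is a path `P_n`, and the sum over
`[P_m, G]` leaves only the terms of `P_{n-1}` and `P_n`, which cancel unless `n = m`. Otherwise a
hole of the set separates some vertex of `G` from every induced path of `G` (the image of a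
connected graph is an interval), so `P_k ⊴ G` implies `P_k + K_1 ⊴ G` and the sum cancels termwise.
-/

open SimpleGraph

/-- A finite simple graph, encoded by its number of vertices together with a
simple graph structure on `Fin n`. -/
def FinGraph : Type := Σ n : ℕ, SimpleGraph (Fin n)

namespace FinGraph

/-- The number of vertices of a graph. -/
def order (G : FinGraph) : ℕ := G.1

/-- Induced containment `H ⊴ G`: there is an injection of the vertices of `H`
into the vertices of `G` which preserves and reflects adjacency (equivalently,
`H` is isomorphic to an induced subgraph of `G`). -/
def Contains (H G : FinGraph) : Prop :=
  ∃ f : Fin H.1 ↪ Fin G.1, ∀ a b : Fin H.1, G.2.Adj (f a) (f b) ↔ H.2.Adj a b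

/-- Isomorphism of finite graphs. -/
def Iso (H G : FinGraph) : Prop := Nonempty (H.2 ≃g G.2)

/-- Package a simple graph on an arbitrary finite vertex type as a `FinGraph`. -/
noncomputable def of {V : Type} [Fintype V] (G : SimpleGraph V) : FinGraph :=
  ⟨Fintype.card V, G.comap ⇑(Fintype.equivFin V).symm⟩

end FinGraph

/-- `T` is a transversal of the interval `[H,G]`: every member lies in `[H,G]`,
distinct members are non-isomorphic, and every graph in `[H,G]` is isomorphic to
a member of `T`. -/
def IsTransversal (H G : FinGraph) (T : Finset FinGraph) : Prop :=
  (∀ X ∈ T, H.Contains X ∧ X.Contains G) ∧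
  (∀ X ∈ T, ∀ Y ∈ T, X ≠ Y → ¬ X.Iso Y) ∧
  (∀ X : FinGraph, H.Contains X → X.Contains G → ∃ Y ∈ T, X.Iso Y)

/-- `mu` is a Möbius function for the poset `𝒢` of all finite simple graphs up to
isomorphism, ordered by induced containment: it is isomorphism invariant, vanishes
on non-comparable pairs, and for every `H ⊴ G` the sum of `mu H ·` over any
transversal of `[H,G]` is `1` if `H ≅ G` and `0` otherwise. -/
def IsMobius (mu : FinGraph → FinGraph → ℤ) : Prop :=
  (∀ H H' G G' : FinGraph, H.Iso H' → G.Iso G' → mu H G = mu H' G') ∧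
  (∀ H G : FinGraph, ¬ H.Contains G → mu H G = 0) ∧
  (∀ H G : FinGraph, H.Contains G → ∀ T : Finset FinGraph, IsTransversal H G T →
    (H.Iso G → ∑ X ∈ T, mu H X = 1) ∧ (¬ H.Iso G → ∑ X ∈ T, mu H X = 0))

open Finset

theorem Set.OrdConnected.exists_separated_of_subset {α : Type*} [LinearOrder α] {J S : Set α}
    (hJ : J.OrdConnected) (hJS : J ⊆ S) (hS : ¬S.OrdConnected) :
    ∃ b ∈ S, ∃ c ∉ S, ∀ j ∈ J, (j < c ∧ c < b) ∨ (b < c ∧ c < j) := by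
  rw [Set.ordConnected_def] at hS
  push Not at hS
  obtain ⟨a, ha, b, hb, hab⟩ := hS
  obtain ⟨c, ⟨hac, hcb⟩, hc⟩ := Set.not_subset.1 hab
  have hac : a < c := hac.lt_of_ne (by rintro rfl; exact hc ha)
  have hcb : c < b := hcb.lt_of_ne (by rintro rfl; exact hc hb)
  have hcJ : c ∉ J := fun h => hc (hJS h)
  by_cases hbelow : ∃ j ∈ J, j < c
  · obtain ⟨j₀, hj₀, hj₀c⟩ := hbelow
    refine ⟨b, hb, c, hc, fun j hj => Or.inl ⟨not_le.1 fun hcj => hcJ ?_, hcb⟩⟩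
    exact hJ.out hj₀ hj ⟨hj₀c.le, hcj⟩
  · push Not at hbelow
    exact ⟨a, ha, c, hc, fun j hj =>
      Or.inr ⟨hac, (hbelow j hj).lt_of_ne fun h => hcJ (h ▸ hj)⟩⟩

namespace SimpleGraph

variable {α U V W : Type*}

theorem Embedding.isIndContained_of_range_subset {G : SimpleGraph V} {H : SimpleGraph W}
    {K : SimpleGraph U} (φ : G ↪g K) (ε : H ↪g K) (h : Set.range ε ⊆ Set.range φ) : H ⊴ G := by
  choose ψ hψ using fun w => h ⟨w, rfl⟩
  refine ⟨⟨⟨ψ, fun a b hab => ε.injective (by rw [← hψ a, ← hψ b, hab])⟩, ?_⟩⟩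
  intro a b
  change G.Adj (ψ a) (ψ b) ↔ H.Adj a b
  rw [← φ.map_adj_iff, hψ, hψ, ε.map_adj_iff]

theorem Embedding.isIndContained_sum_bot {H : SimpleGraph W} {G : SimpleGraph V} (f : H ↪g G)
    (v : V) (hv : ∀ w, f w ≠ v ∧ ¬G.Adj (f w) v) : H ⊕g (⊥ : SimpleGraph Unit) ⊴ G := by
  have hinj : Function.Injective (Sum.elim f fun _ : Unit => v) :=
    f.injective.sumElim (Function.injective_of_subsingleton _) fun w _ => (hv w).1
  refine ⟨⟨⟨_, hinj⟩, ?_⟩⟩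
  rintro (a | _) (b | _)
  · simp
  · simp [hv a]
  · simpa using fun h : G.Adj v (f b) => (hv b).2 h.symm
  · simp

section Hasse

variable [LinearOrder α]

theorem hasse_not_adj_of_lt_of_lt {a b c : α} (hac : a < c) (hcb : c < b) :
    ¬(hasse α).Adj a b := by
  rw [hasse_adj]
  rintro (h | h)
  · exact h.2 hac hcb
  · exact lt_asymm (hac.trans hcb) h.lt

theorem Walk.mem_support_of_mem_Icc_hasse {u z w : α} (p : (hasse α).Walk u z)
    (hw : w ∈ Set.Icc u z) : w ∈ p.support := by
  induction p with
  | nil => simp [le_antisymm hw.2 hw.1]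
  | @cons u u' z h p ih =>
    rcases hw.1.eq_or_lt with rfl | huw
    · exact p.support.mem_cons_self
    · refine List.mem_cons_of_mem _ (ih ⟨?_, hw.2⟩)
      rcases hasse_adj.1 h with h | h
      · exact h.ge_of_gt huw
      · exact h.lt.le.trans huw.le

theorem Preconnected.ordConnected_range_hasse {G : SimpleGraph V} (hG : G.Preconnected)
    (φ : G →g hasse α) : (Set.range φ).OrdConnected := by
  refine ⟨?_⟩
  rintro _ ⟨v, rfl⟩ _ ⟨w, rfl⟩ c hc
  have hmem := ((hG v w).some.map φ).mem_support_of_mem_Icc_hasse hc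
  rw [Walk.support_map, List.mem_map] at hmem
  obtain ⟨u, -, rfl⟩ := hmem
  exact ⟨u, rfl⟩

theorem pathGraph_isIndContained_of_ordConnected_range [Fintype V] {G : SimpleGraph V} {n : ℕ}
    (φ : G ↪g hasse α) (hφ : (Set.range φ).OrdConnected) (hn : Fintype.card V = n) :
    pathGraph n ⊴ G := by
  classical
  set s := univ.map φ.toEmbedding
  have hs : s.card = n := by simp [s, hn]
  have hrange : Set.range (s.orderEmbOfFin hs) = Set.range φ := by simp [s]
  let ε : pathGraph n ↪g hasse α :=
    ⟨(s.orderEmbOfFin hs).toEmbedding, by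
      intro a b
      simp [pathGraph, hasse_adj, (hrange ▸ hφ).apply_covBy_apply_iff]⟩
  exact φ.isIndContained_of_range_subset ε hrange.subset

theorem isIndContained_sum_bot_of_not_ordConnected_range {H : SimpleGraph W} {G : SimpleGraph V}
    (hH : H.Preconnected) (hHG : H ⊴ G) (φ : G ↪g hasse α) (hφ : ¬(Set.range φ).OrdConnected) :
    H ⊕g (⊥ : SimpleGraph Unit) ⊴ G := by
  obtain ⟨f⟩ := hHG
  have hJ := hH.ordConnected_range_hasse (φ.toHom.comp f.toHom)
  obtain ⟨_, ⟨v, rfl⟩, c, -, hsep⟩ :=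
    hJ.exists_separated_of_subset (by rintro _ ⟨w, rfl⟩; exact ⟨f w, rfl⟩) hφ
  refine f.isIndContained_sum_bot v fun w => ?_
  rw [← φ.map_adj_iff]
  rcases hsep _ ⟨w, rfl⟩ with ⟨h₁, h₂⟩ | ⟨h₁, h₂⟩
  · exact ⟨ne_of_apply_ne φ (h₁.trans h₂).ne, hasse_not_adj_of_lt_of_lt h₁ h₂⟩
  · exact ⟨ne_of_apply_ne φ (h₁.trans h₂).ne', fun h => hasse_not_adj_of_lt_of_lt h₁ h₂ h.symm⟩

end Hasse

def pathGraphCastLE {k n : ℕ} (h : k ≤ n) : pathGraph k ↪g pathGraph n :=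
  ⟨Fin.castLEEmb h, by intro a b; simp [pathGraph_adj]⟩

end SimpleGraph

namespace FinGraph

variable {G H X Y Z : FinGraph}

theorem contains_iff : H.Contains G ↔ H.2 ⊴ G.2 :=
  ⟨fun ⟨f, hf⟩ => ⟨⟨f, hf _ _⟩⟩, fun ⟨f⟩ => ⟨f.toEmbedding, fun _ _ => f.map_adj_iff⟩⟩

theorem Iso.refl (X : FinGraph) : X.Iso X := ⟨.refl⟩

theorem Iso.symm (h : X.Iso Y) : Y.Iso X := ⟨h.some.symm⟩

theorem Iso.trans (h : X.Iso Y) (h' : Y.Iso Z) : X.Iso Z := ⟨h'.some.comp h.some⟩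

theorem Iso.contains (h : X.Iso Y) : X.Contains Y := contains_iff.2 h.some.isIndContained

theorem Contains.refl (X : FinGraph) : X.Contains X := (Iso.refl X).contains

theorem Contains.trans (h : X.Contains Y) (h' : Y.Contains Z) : X.Contains Z :=
  contains_iff.2 ((contains_iff.1 h).trans (contains_iff.1 h'))

theorem Contains.order_le (h : X.Contains Y) : X.order ≤ Y.order := by
  obtain ⟨f, -⟩ := h
  simpa [order] using Fintype.card_le_of_embedding f

theorem Iso.order_eq (h : X.Iso Y) : X.order = Y.order := by
  simpa [order] using Fintype.card_congr h.some.toEquiv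

theorem Contains.iso_of_order_eq (h : X.Contains Y) (ho : X.order = Y.order) : X.Iso Y := by
  obtain ⟨n, GX⟩ := X
  obtain ⟨_, GY⟩ := Y
  obtain rfl : n = _ := ho
  obtain ⟨f, hf⟩ := h
  exact ⟨⟨Equiv.ofBijective f (Finite.injective_iff_bijective.1 f.injective), hf _ _⟩⟩

noncomputable def isoOf {V : Type} [Fintype V] (G : SimpleGraph V) : (of G).2 ≃g G :=
  ⟨(Fintype.equivFin V).symm, Iff.rfl⟩

instance isoSetoid : Setoid FinGraph := ⟨Iso, ⟨Iso.refl, Iso.symm, Iso.trans⟩⟩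

theorem finite_setOf_order_le (N : ℕ) : {X : FinGraph | X.order ≤ N}.Finite := by
  refine (Set.finite_range fun p : Σ n : Fin (N + 1), SimpleGraph (Fin n) =>
    (⟨p.1, p.2⟩ : FinGraph)).subset ?_
  rintro ⟨n, G⟩ (h : n ≤ N)
  exact ⟨⟨⟨n, Nat.lt_succ_of_le h⟩, G⟩, rfl⟩

theorem exists_isTransversal (H G : FinGraph) : ∃ T, IsTransversal H G T := by
  classical
  have hS : {X | H.Contains X ∧ X.Contains G}.Finite :=
    (finite_setOf_order_le G.order).subset fun X hX => hX.2.order_le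
  have hrep (X : FinGraph) : (⟦X⟧ : Quotient isoSetoid).out.Iso X := Quotient.mk_out X
  refine ⟨hS.toFinset.image fun X => (⟦X⟧ : Quotient isoSetoid).out, ?_, ?_, ?_⟩
  · simp only [mem_image, Set.Finite.mem_toFinset]
    rintro _ ⟨X, ⟨hHX, hXG⟩, rfl⟩
    exact ⟨hHX.trans (hrep X).symm.contains, (hrep X).contains.trans hXG⟩
  · simp only [mem_image]
    rintro _ ⟨X, -, rfl⟩ _ ⟨Y, -, rfl⟩ hne hiso
    exact hne (congrArg Quotient.out (Quotient.sound ((hrep X).symm.trans (hiso.trans (hrep Y)))))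
  · intro X hHX hXG
    exact ⟨_, mem_image_of_mem _ (hS.mem_toFinset.2 ⟨hHX, hXG⟩), (hrep X).symm⟩

end FinGraph

open FinGraph

section Transversal

variable {G H K : FinGraph} {T : Finset FinGraph}

open Classical in
theorem IsTransversal.sum_ite_iso (hT : IsTransversal H G T) (A : FinGraph) (c : ℤ) :
    ∑ X ∈ T, (if X.Iso A then c else 0) = if H.Contains A ∧ A.Contains G then c else 0 := by
  split_ifs with hA
  · obtain ⟨Y, hY, hAY⟩ := hT.2.2 A hA.1 hA.2
    rw [sum_eq_single_of_mem Y hY fun X hX hXY =>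
      if_neg fun hXA => hT.2.1 X hX Y hY hXY (hXA.trans hAY), if_pos hAY.symm]
  · refine sum_eq_zero fun X hX => if_neg fun hXA => hA ?_
    exact ⟨(hT.1 X hX).1.trans hXA.contains, hXA.symm.contains.trans (hT.1 X hX).2⟩

open Classical in
theorem IsMobius.sum_isTransversal {mu : FinGraph → FinGraph → ℤ} (hmu : IsMobius mu)
    (hHG : H.Contains G) (hT : IsTransversal H G T) :
    ∑ X ∈ T, mu H X = if H.Iso G then 1 else 0 := by
  split_ifs with h
  · exact (hmu.2.2 H G hHG T hT).1 h
  · exact (hmu.2.2 H G hHG T hT).2 h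

open Classical in
theorem IsMobius.eq_of_forall_sum_isTransversal {mu : FinGraph → FinGraph → ℤ} (hmu : IsMobius mu)
    (g : FinGraph → ℤ) (hg : ∀ X Y, X.Iso Y → g X = g Y)
    (hsum : ∀ G, H.Contains G → G.Contains K → ∀ T, IsTransversal H G T →
      ∑ X ∈ T, g X = if H.Iso G then 1 else 0)
    (hHG : H.Contains G) (hGK : G.Contains K) : mu H G = g G := by
  induction hn : G.order using Nat.strong_induction_on generalizing G with
  | _ n ih =>
  obtain ⟨T, hT⟩ := exists_isTransversal H G
  obtain ⟨Y, hY, hGY⟩ := hT.2.2 G hHG (.refl G)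
  have hrest : ∀ X ∈ T.erase Y, mu H X = g X := by
    intro X hX
    obtain ⟨hXY, hXT⟩ := mem_erase.1 hX
    obtain ⟨hHX, hXG⟩ := hT.1 X hXT
    have hlt : X.order < G.order := hXG.order_le.lt_of_ne fun h =>
      hT.2.1 X hXT Y hY hXY ((hXG.iso_of_order_eq h).trans hGY)
    exact ih _ (hn ▸ hlt) hHX (hXG.trans hGK) rfl
  have hmuT := hmu.sum_isTransversal hHG hT
  have hgT := hsum G hHG hGK T hT
  rw [← add_sum_erase T _ hY, sum_congr rfl hrest] at hmuT
  rw [← add_sum_erase T _ hY] at hgT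
  rw [hmu.1 H H G Y (.refl H) hGY, hg G Y hGY]
  linarith

end Transversal

namespace FinGraph

variable {G : FinGraph} {k n x : ℕ}

def path (k : ℕ) : FinGraph := ⟨k, pathGraph k⟩

noncomputable def pathAddIsolated (k : ℕ) : FinGraph := of (pathGraph k ⊕g (⊥ : SimpleGraph Unit))

theorem order_pathAddIsolated (k : ℕ) : (pathAddIsolated k).order = k + 1 := by
  simp [pathAddIsolated, of, order]

theorem path_contains_path (h : k ≤ n) : (path k).Contains (path n) :=
  contains_iff.2 ⟨pathGraphCastLE h⟩

theorem path_contains_path_iff : (path k).Contains (path n) ↔ k ≤ n :=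
  ⟨Contains.order_le, path_contains_path⟩

theorem path_iso_path_iff : (path k).Iso (path n) ↔ k = n :=
  ⟨Iso.order_eq, by rintro rfl; exact .refl _⟩

theorem path_contains_pathAddIsolated (k : ℕ) : (path k).Contains (pathAddIsolated k) :=
  contains_iff.2 (Embedding.sumInl.isIndContained.trans (isoOf _).symm.isIndContained)

theorem pathAddIsolated_contains_path (h : k + 2 ≤ n) :
    (pathAddIsolated k).Contains (path n) := by
  refine contains_iff.2 ((isoOf _).isIndContained.trans ?_)
  refine (pathGraphCastLE (by omega)).isIndContained_sum_bot ⟨k + 1, by omega⟩ fun w => ?_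
  simp [pathGraphCastLE, Fin.ext_iff, pathGraph_adj]
  omega

theorem not_path_iso_pathAddIsolated (hk : 0 < k) (n : ℕ) :
    ¬(path n).Iso (pathAddIsolated k) := by
  intro h
  obtain rfl : n = k + 1 := h.order_eq.trans (order_pathAddIsolated k)
  obtain ⟨e⟩ := h
  have : Nonempty (Fin k) := ⟨⟨0, hk⟩⟩
  exact not_connected_sum
    ((SimpleGraph.Iso.connected_iff (e.trans (isoOf _))).1 (pathGraph_connected k))

theorem pathAddIsolated_contains_path_iff (hk : 0 < k) :
    (pathAddIsolated k).Contains (path n) ↔ k + 2 ≤ n := by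
  refine ⟨fun h => ?_, pathAddIsolated_contains_path⟩
  have hle : k + 1 ≤ n := order_pathAddIsolated k ▸ h.order_le
  refine (Nat.eq_or_lt_of_le hle).resolve_left fun hn => ?_
  exact not_path_iso_pathAddIsolated hk n (h.iso_of_order_eq (by
    rw [order_pathAddIsolated, hn]; rfl)).symm

theorem pathAddIsolated_contains_of_path_contains (hGx : G.Contains (path x))
    (hG : ¬G.Iso (path G.order)) (hk : (path k).Contains G) : (pathAddIsolated k).Contains G := by
  obtain ⟨φ⟩ := contains_iff.1 hGx
  have hφ : ¬(Set.range φ).OrdConnected := fun h => hG <| Iso.symm <|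
    Contains.iso_of_order_eq
      (contains_iff.2 (pathGraph_isIndContained_of_ordConnected_range φ h (Fintype.card_fin _))) rfl
  exact contains_iff.2 ((isoOf _).isIndContained.trans
    (isIndContained_sum_bot_of_not_ordConnected_range (pathGraph_preconnected k)
      (contains_iff.1 hk) φ hφ))

end FinGraph

theorem sum_Icc_ite_le_sub_ite_add_two_le {m n x : ℕ} (hmn : m ≤ n) (hnx : n ≤ x) :
    ∑ k ∈ Icc m x, ((if k ≤ n then (-1 : ℤ) ^ (k - m) else 0) -
      if k + 2 ≤ n then (-1) ^ (k - m) else 0) = if m = n then 1 else 0 := by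
  have hterm (k : ℕ) : ((if k ≤ n then (-1 : ℤ) ^ (k - m) else 0) -
      if k + 2 ≤ n then (-1) ^ (k - m) else 0) =
      if k = n ∨ k + 1 = n then (-1) ^ (k - m) else 0 := by
    split_ifs <;> first | (exfalso; omega) | simp
  simp_rw [hterm, ← sum_filter]
  rcases hmn.eq_or_lt with rfl | hlt
  · rw [show (Icc m x).filter (fun k => k = m ∨ k + 1 = m) = {m} by ext; simp; omega]
    simp
  · rw [show (Icc m x).filter (fun k => k = n ∨ k + 1 = n) = {n - 1, n} by ext; simp; omega,
      sum_pair (by omega), if_neg hlt.ne, show n - m = n - 1 - m + 1 by omega, pow_succ]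
    ring

namespace FinGraph

variable {X Y : FinGraph} {m x : ℕ}

open Classical in
/-- The closed form of `μ(P_m, ·)` on the induced subgraphs of `P_x`. -/
noncomputable def pathMobius (m x : ℕ) (X : FinGraph) : ℤ :=
  ∑ k ∈ Icc m x, ((if X.Iso (path k) then (-1) ^ (k - m) else 0) -
    if X.Iso (pathAddIsolated k) then (-1) ^ (k - m) else 0)

theorem pathMobius_congr (h : X.Iso Y) : pathMobius m x X = pathMobius m x Y := by
  classical
  have hiff (A : FinGraph) : X.Iso A ↔ Y.Iso A := ⟨h.symm.trans, h.trans⟩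
  simp only [pathMobius, hiff]

theorem pathMobius_path (hm : 0 < m) (hx : m ≤ x) : pathMobius m x (path x) = (-1) ^ (x - m) := by
  rw [pathMobius, sum_eq_single_of_mem x (mem_Icc.2 ⟨hx, le_rfl⟩)]
  · simp [Iso.refl, not_path_iso_pathAddIsolated (hm.trans_le hx)]
  · intro k hk hkx
    simp [path_iso_path_iff, Ne.symm hkx,
      not_path_iso_pathAddIsolated (hm.trans_le (mem_Icc.1 hk).1)]

end FinGraph

section PathMobius

variable {G : FinGraph} {T : Finset FinGraph} {m x : ℕ}

open Classical in
theorem IsTransversal.sum_pathMobius (hT : IsTransversal (path m) G T) :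
    ∑ X ∈ T, pathMobius m x X = ∑ k ∈ Icc m x, ((if (path k).Contains G then (-1) ^ (k - m) else 0)
      - if (pathAddIsolated k).Contains G then (-1) ^ (k - m) else 0) := by
  unfold pathMobius
  rw [sum_comm]
  refine sum_congr rfl fun k hk => ?_
  have hmk := path_contains_path (mem_Icc.1 hk).1
  rw [sum_sub_distrib, hT.sum_ite_iso, hT.sum_ite_iso]
  simp [hmk, hmk.trans (path_contains_pathAddIsolated k)]

open Classical in
theorem IsTransversal.sum_pathMobius_eq_ite (hm : 0 < m) (hmG : (path m).Contains G)
    (hGx : G.Contains (path x)) (hT : IsTransversal (path m) G T) :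
    ∑ X ∈ T, pathMobius m x X = if (path m).Iso G then 1 else 0 := by
  rw [hT.sum_pathMobius]
  by_cases hG : G.Iso (path G.order)
  · have hcont (A : FinGraph) : A.Contains G ↔ A.Contains (path G.order) :=
      ⟨fun h => h.trans hG.contains, fun h => h.trans hG.symm.contains⟩
    refine (sum_congr rfl fun k hk => ?_).trans
      ((sum_Icc_ite_le_sub_ite_add_two_le hmG.order_le hGx.order_le).trans
        (if_congr ⟨fun h => (path_iso_path_iff.2 h).trans hG.symm, Iso.order_eq⟩ rfl rfl))
    simp only [hcont, path_contains_path_iff,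
      pathAddIsolated_contains_path_iff (hm.trans_le (mem_Icc.1 hk).1)]
    -- the two sides differ only in their `Decidable` instances
    rfl
  · rw [if_neg fun h => hG (h.symm.trans (path_iso_path_iff.2 h.order_eq))]
    refine sum_eq_zero fun k _ => ?_
    rw [if_congr ⟨pathAddIsolated_contains_of_path_contains hGx hG, fun h =>
      (path_contains_pathAddIsolated k).trans h⟩ rfl rfl, sub_self]

end PathMobius

/-- `μ(P_m, P_x) = (-1)^(x-m)` for `0 < m ≤ x`. -/
theorem mobius_path_path (mu : FinGraph → FinGraph → ℤ) (hmu : IsMobius mu)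
    (m x : ℕ) (hm : 0 < m) (hx : m ≤ x) :
    mu ⟨m, SimpleGraph.pathGraph m⟩ ⟨x, SimpleGraph.pathGraph x⟩ = (-1) ^ (x - m) := by
  have h := hmu.eq_of_forall_sum_isTransversal (K := path x) (pathMobius m x)
    (fun _ _ => pathMobius_congr) (fun _ hmG hGx _ hT => hT.sum_pathMobius_eq_ite hm hmG hGx)
    (path_contains_path hx) (.refl _)
  exact h.trans (pathMobius_path hm hx)
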